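/- arXiv:1809.09033 — 3 statements merged into one kernel-verified Lean document; each statement's English description precedes it below -/
import Mathlib

section
/- If a densely non-increasing sequence (u_β)_{β<α} in a linear order has finite range {u_β ∣ β < α}, then it is non-increasing: β < β' < α implies u_β ≥ u_{β'}. -/
/-! An antitone map with finite range is constant from any point where it attains its least
value. By well-founded induction on `β'`, `u` is antitone, hence eventually constant, on
`[β, β')`; density on `[γ, β' + 1)` for a tail `[γ, β')` of constancy then
forces `u β' ≤ u γ ≤ u β`. -/

/-- The sequence `u` (restricted below `α`) is densely non-increasing. -/
def DenselyNonIncreasing {U : Type*} [LinearOrder U] (u : Ordinal → U) (α : Ordinal) : Prop :=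
  ∀ γ γ', γ < γ' → γ' ≤ α →
    (∀ β, γ ≤ β → β < γ' → u β = u γ) ∨ ∃ β β', γ ≤ β ∧ β < β' ∧ β' < γ' ∧ u β' < u β

theorem AntitoneOn.exists_forall_ge_eq_of_finite_image {ι U : Type*} [Preorder ι] [LinearOrder U]
    {f : ι → U} {s : Set ι} (hf : AntitoneOn f s) (hfin : (f '' s).Finite) (hs : s.Nonempty) :
    ∃ c ∈ s, ∀ x ∈ s, c ≤ x → f x = f c := by
  obtain ⟨_, ⟨c, hc, rfl⟩, hmin⟩ := Set.exists_min_image (f '' s) id hfin (hs.image f)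
  exact ⟨c, hc, fun x hx hcx => le_antisymm (hf hc hx hcx) (hmin _ (Set.mem_image_of_mem f hx))⟩

theorem DenselyNonIncreasing.le_of_forall_Ico_eq {U : Type*} [LinearOrder U]
    {u : Ordinal → U} {α γ β' : Ordinal} (hd : DenselyNonIncreasing u α) (hγ : γ < β')
    (hβ' : β' < α) (hconst : ∀ x ∈ Set.Ico γ β', u x = u γ) : u β' ≤ u γ := by
  rcases hd γ (Order.succ β') (hγ.trans (Order.lt_succ β')) (Order.succ_le_of_lt hβ')
    with hall | ⟨b, b', hγb, hbb', hb'β', hlt⟩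
  · exact (hall β' hγ.le (Order.lt_succ β')).le
  · have hb'le : b' ≤ β' := Order.lt_succ_iff.mp hb'β'
    rw [hconst b ⟨hγb, hbb'.trans_le hb'le⟩] at hlt
    rcases hb'le.lt_or_eq with hb'β' | rfl
    · exact absurd (hconst b' ⟨hγb.trans hbb'.le, hb'β'⟩) hlt.ne
    · exact hlt.le

theorem denselyNonIncreasing_finite_range_nonIncreasing {U : Type*} [LinearOrder U]
    (u : Ordinal → U) (α : Ordinal)
    (hd : DenselyNonIncreasing u α)
    (hfin : (u '' Set.Iio α).Finite) :
    ∀ β β' : Ordinal, β < β' → β' < α → u β' ≤ u β := by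
  intro β β' hββ' hβ'α
  induction β' using WellFoundedLT.induction generalizing β with
  | _ β' ih =>
    have hanti : AntitoneOn u (Set.Ico β β') := fun x _ y hy hxy =>
      hxy.eq_or_lt.elim (fun h => h ▸ le_rfl) fun h => ih y hy.2 x h (hy.2.trans hβ'α)
    obtain ⟨c, hc, hconst⟩ := hanti.exists_forall_ge_eq_of_finite_image
      (hfin.subset (Set.image_mono fun x hx => hx.2.trans hβ'α)) ⟨β, le_rfl, hββ'⟩
    calc u β' ≤ u c := hd.le_of_forall_Ico_eq hc.2 hβ'α
          fun x hx => hconst x ⟨hc.1.trans hx.1, hx.2⟩ hx.1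
      _ ≤ u β := hanti ⟨le_rfl, hββ'⟩ hc hc.1
end

section
/- Let (u_β)_{β<α} be a densely non-increasing sequence in a linear order that is not non-increasing. Then there is a greatest ordinal α' < α such that the restriction (u_β)_{β<α'} is non-increasing; moreover this α' is a limit ordinal, and the sequence is not ultimately constant in α' (for every γ < α' there exist γ ≤ β < β' < α' with u_β > u_{β'}). -/
/-- The sequence `u` is non-increasing on indices below `γ`. -/
def NonIncreasingBelow {U : Type*} [LinearOrder U] (u : Ordinal → U) (γ : Ordinal) : Prop :=
  ∀ β β' : Ordinal, β < β' → β' < γ → u β' ≤ u β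

/-!
Let `δ` be the least index that sits above an ascent `β < δ`, `u β < u δ`. Then `u` is
non-increasing below `δ` but on no longer prefix, so `δ` is the greatest such ordinal. For `γ < δ`,
put `γ' = max γ β`, so that `u γ' ≤ u β < u δ`: the sequence is not constant on `[γ', δ]`, and a
descent there cannot end at `δ`, because `u δ` exceeds every earlier value from `γ'` on. Hence
`[γ, δ)` contains a descent, which also forces `δ` to be a limit.
-/

open Order

section

variable {U : Type*} [LinearOrder U] {u : Ordinal → U}

theorem NonIncreasingBelow.le_of_le {δ β β' : Ordinal} (h : NonIncreasingBelow u δ)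
    (hββ' : β ≤ β') (hβ' : β' < δ) : u β' ≤ u β := by
  rcases hββ'.eq_or_lt with rfl | hlt
  · exact le_rfl
  · exact h β β' hlt hβ'

theorem exists_least_ascent {α : Ordinal} (h : ¬ NonIncreasingBelow u α) :
    ∃ δ < α, NonIncreasingBelow u δ ∧ ∃ β < δ, u β < u δ := by
  let s : Set Ordinal := {δ | δ < α ∧ ∃ β < δ, u β < u δ}
  have hs : s.Nonempty := by
    simp only [NonIncreasingBelow, not_forall, not_le] at h
    obtain ⟨β, δ, hβδ, hδα, hu⟩ := h
    exact ⟨δ, hδα, β, hβδ, hu⟩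
  obtain ⟨δ, ⟨hδα, hascent⟩, hmin⟩ := wellFounded_lt.has_min s hs
  refine ⟨δ, hδα, fun β β' hββ' hβ'δ => ?_, hascent⟩
  by_contra! hu
  exact hmin β' ⟨hβ'δ.trans hδα, β, hββ', hu⟩ hβ'δ

theorem isGreatest_nonIncreasingBelow_of_ascent {α δ β : Ordinal} (hδα : δ < α)
    (hδ : NonIncreasingBelow u δ) (hβδ : β < δ) (hu : u β < u δ) :
    IsGreatest {γ : Ordinal | γ < α ∧ NonIncreasingBelow u γ} δ := by
  refine ⟨⟨hδα, hδ⟩, fun γ ⟨_, hγ⟩ => ?_⟩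
  by_contra! hδγ
  exact (hγ β δ hβδ hδγ).not_gt hu

theorem DenselyNonIncreasing.exists_descent_of_ascent {α δ β : Ordinal}
    (hd : DenselyNonIncreasing u α) (hδα : δ < α) (hδ : NonIncreasingBelow u δ) (hβδ : β < δ)
    (hu : u β < u δ) (γ : Ordinal) (hγδ : γ < δ) :
    ∃ b b' : Ordinal, γ ≤ b ∧ b < b' ∧ b' < δ ∧ u b' < u b := by
  set γ' := max γ β
  have hγ'δ : γ' < δ := max_lt hγδ hβδ
  have hγ'u : u γ' < u δ := (hδ.le_of_le (le_max_right γ β) hγ'δ).trans_lt hu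
  rcases hd γ' (succ δ) (hγ'δ.trans (lt_succ δ)) (succ_le_of_lt hδα) with
    hconst | ⟨b, b', hγ'b, hbb', hb'δ, hub⟩
  · exact absurd (hconst δ hγ'δ.le (lt_succ δ)) hγ'u.ne'
  · rcases (lt_succ_iff.mp hb'δ).lt_or_eq with hb'δ | rfl
    · exact ⟨b, b', (le_max_left γ β).trans hγ'b, hbb', hb'δ, hub⟩
    · exact absurd ((hub.trans_le (hδ.le_of_le hγ'b hbb')).trans hγ'u) (lt_irrefl _)

end

theorem isSuccLimit_of_forall_exists_between {α : Type*} [Preorder α] {a : α} (ha : ¬ IsMin a)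
    (h : ∀ b < a, ∃ c, b < c ∧ c < a) : IsSuccLimit a :=
  ⟨ha, fun b hba => let ⟨_, hbc, hca⟩ := h b hba.lt; hba.2 hbc hca⟩

theorem denselyNonIncreasing_greatest_nonIncreasing_prefix {U : Type*} [LinearOrder U]
    (u : Ordinal → U) (α : Ordinal)
    (hd : DenselyNonIncreasing u α)
    (hnot : ¬ NonIncreasingBelow u α) :
    ∃ α' : Ordinal,
      IsGreatest {γ : Ordinal | γ < α ∧ NonIncreasingBelow u γ} α' ∧
      Order.IsSuccLimit α' ∧
      ∀ γ < α', ∃ β β' : Ordinal, γ ≤ β ∧ β < β' ∧ β' < α' ∧ u β' < u β := by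
  obtain ⟨δ, hδα, hδ, β, hβδ, hu⟩ := exists_least_ascent hnot
  have hdescent := hd.exists_descent_of_ascent hδα hδ hβδ hu
  refine ⟨δ, isGreatest_nonIncreasingBelow_of_ascent hδα hδ hβδ hu, ?_, hdescent⟩
  refine isSuccLimit_of_forall_exists_between (not_isMin_of_lt hβδ) fun γ hγδ => ?_
  obtain ⟨b, b', hγb, hbb', hb'δ, -⟩ := hdescent γ hγδ
  exact ⟨b', hγb.trans_lt hbb', hb'δ⟩
end

section
/- Let u be a finite Lyndon word and x a finite word such that x ◁ u, i.e., x = y·a·x' and u = y·b·u' for some words y, x', u' and letters a < b. If x = v₁v₂⋯v_m is the unique non-increasing Lyndon factorization of x, then uⁿ·v₁·v₂⋯v_m is the unique non-increasing Lyndon factorization of uⁿx, for every n ≥ 0 (when x is nonempty). -/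
/-- A finite word is a Lyndon word if it is nonempty and lexicographically
strictly smaller than all of its proper nonempty suffixes. -/
def IsLyndon {A : Type*} [LinearOrder A] (w : List A) : Prop :=
  w ≠ [] ∧ ∀ i : ℕ, 0 < i → i < w.length → w < w.drop i


/-- `x ◁ u`: `x` and `u` agree on a common prefix and then `x` has a strictly
smaller letter than `u`. -/
def LtStr {A : Type*} [LinearOrder A] (x u : List A) : Prop :=
  ∃ (y x' u' : List A) (a b : A), a < b ∧ x = y ++ a :: x' ∧ u = y ++ b :: u'

/-!
In a non-increasing factorization `b :: M` into Lyndon words, the first factor `b` is the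
longest Lyndon prefix of the word: a longer Lyndon prefix `a = b ++ t` would end with a
nonempty prefix `p` of some later factor `m`, and then `a < p ≤ m ≤ b ≤ a`. Hence two such
factorizations of one word share their first factor, and are equal by induction.

For existence, the first factor `v₁` of `x` is a prefix of `x`, and `x ◁ u` gives
`v₁ ≤ x < u`; so prepending copies of the Lyndon word `u` keeps the factors non-increasing.
-/

theorem List.exists_nonempty_prefix_of_mem_suffix_of_isPrefix_flatten {α : Type*} :
    ∀ {M : List (List α)} {t : List α}, t ≠ [] → t <+: M.flatten →
      ∃ m ∈ M, ∃ p, p ≠ [] ∧ p <+: m ∧ p <:+ t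
  | [], t, ht, htM => absurd (List.prefix_nil.mp htM) ht
  | m :: M, t, ht, htM => by
    rw [List.flatten_cons] at htM
    by_cases hlen : t.length ≤ m.length
    · exact ⟨m, List.mem_cons_self, t, ht,
        List.prefix_of_prefix_length_le htM (List.prefix_append _ _) hlen, List.suffix_refl t⟩
    obtain ⟨t', rfl⟩ :=
      List.prefix_of_prefix_length_le (List.prefix_append _ _) htM (by omega)
    rcases eq_or_ne t' [] with rfl | ht'
    · exact ⟨m, List.mem_cons_self, m, by simpa using ht, List.prefix_refl m, by simp⟩
    obtain ⟨m', hm', p, hp, hpm', hpt'⟩ :=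
      exists_nonempty_prefix_of_mem_suffix_of_isPrefix_flatten ht'
        ((List.prefix_append_right_inj m).mp htM)
    exact ⟨m', List.mem_cons_of_mem m hm', p, hp, hpm', hpt'.trans (List.suffix_append m t')⟩

section

variable {A : Type*} [LinearOrder A]

def IsLyndonFactorization (L : List (List A)) : Prop :=
  (∀ w ∈ L, IsLyndon w) ∧ L.IsChain (fun a b => b ≤ a)

/-- Core's `List.IsPrefix.le` is about core's `≤` on lists, which Mathlib's `List.LE'` overrides. -/
theorem List.IsPrefix.le' {p w : List A} (h : p <+: w) : p ≤ w :=
  le_of_not_gt h.le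

theorem LtStr.lt {x u : List A} (h : LtStr x u) : x < u := by
  obtain ⟨y, x', u', a, b, hab, rfl, rfl⟩ := h
  exact List.append_left_lt (List.cons_lt_cons_iff.mpr (Or.inl hab))

theorem IsLyndon.lt_of_isSuffix {w s : List A} (hw : IsLyndon w) (hs : s <:+ w)
    (hne : s ≠ []) (hlen : s.length < w.length) : w < s := by
  obtain ⟨p, rfl⟩ := hs
  have hp : 0 < p.length := by
    simp only [List.length_append] at hlen
    omega
  simpa using hw.2 p.length hp (by simp [List.length_pos_iff.mpr hne])

theorem IsLyndon.length_le_of_isPrefix_append_flatten {a b : List A} {M : List (List A)}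
    (ha : IsLyndon a) (hb : b ≠ []) (hM : ∀ m ∈ M, m ≤ b) (hab : a <+: b ++ M.flatten) :
    a.length ≤ b.length := by
  by_contra! hlen
  obtain ⟨t, rfl⟩ := List.prefix_of_prefix_length_le (List.prefix_append _ _) hab hlen.le
  have ht : t ≠ [] := by
    rintro rfl
    simp at hlen
  obtain ⟨m, hm, p, hp, hpm, hpt⟩ :=
    List.exists_nonempty_prefix_of_mem_suffix_of_isPrefix_flatten ht
      ((List.prefix_append_right_inj b).mp hab)
  have hpa : b ++ t < p := ha.lt_of_isSuffix (hpt.trans (List.suffix_append b t)) hp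
    (by
      have := hpt.length_le
      have := List.length_pos_iff.mpr hb
      simp only [List.length_append]
      omega)
  have hap : p ≤ b ++ t := le_trans hpm.le' (le_trans (hM m hm) (List.prefix_append b t).le')
  exact absurd hpa (not_lt.mpr hap)

namespace IsLyndonFactorization

theorem of_cons {a : List A} {L : List (List A)} (h : IsLyndonFactorization (a :: L)) :
    IsLyndon a ∧ (∀ w ∈ L, w ≤ a) ∧ IsLyndonFactorization L := by
  have : IsTrans (List A) (fun a b => b ≤ a) := ⟨fun _ _ _ h₁ h₂ => h₂.trans h₁⟩
  exact ⟨h.1 a List.mem_cons_self,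
    (List.pairwise_cons.mp (List.isChain_iff_pairwise.mp h.2)).1,
    fun w hw => h.1 w (List.mem_cons_of_mem a hw), h.2.tail⟩

theorem eq_nil_of_flatten_eq_nil {L : List (List A)} (hL : IsLyndonFactorization L)
    (h : L.flatten = []) : L = [] :=
  List.eq_nil_iff_forall_not_mem.mpr fun w hw =>
    (hL.1 w hw).1 (List.flatten_eq_nil_iff.mp h w hw)

theorem eq_of_flatten_eq : ∀ {L M : List (List A)}, IsLyndonFactorization L →
    IsLyndonFactorization M → L.flatten = M.flatten → L = M
  | [], _, _, hM, h => (hM.eq_nil_of_flatten_eq_nil h.symm).symm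
  | _ :: _, [], hL, _, h => hL.eq_nil_of_flatten_eq_nil h
  | a :: L, b :: M, hL, hM, h => by
    obtain ⟨ha, haL, hL'⟩ := hL.of_cons
    obtain ⟨hb, hbM, hM'⟩ := hM.of_cons
    rw [List.flatten_cons, List.flatten_cons] at h
    have hlen : a.length = b.length := le_antisymm
      (ha.length_le_of_isPrefix_append_flatten hb.1 hbM (h ▸ List.prefix_append _ _))
      (hb.length_le_of_isPrefix_append_flatten ha.1 haL (h ▸ List.prefix_append _ _))
    obtain ⟨rfl, hLM⟩ := List.append_inj h hlen
    rw [eq_of_flatten_eq hL' hM' hLM]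

theorem replicate_append {u : List A} {L : List (List A)} (hu : IsLyndon u)
    (hL : IsLyndonFactorization L) (hLu : ∀ v ∈ L.head?, v ≤ u) (n : ℕ) :
    IsLyndonFactorization (List.replicate n u ++ L) := by
  refine ⟨fun w hw => ?_,
    (List.isChain_replicate_of_rel (r := fun a b => b ≤ a) n le_rfl).append hL.2 ?_⟩
  · rcases List.mem_append.mp hw with hw | hw
    · exact List.eq_of_mem_replicate hw ▸ hu
    · exact hL.1 w hw
  · intro w hw v hv
    rw [List.eq_of_mem_replicate (List.mem_of_mem_getLast? hw)]
    exact hLu v hv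

end IsLyndonFactorization

end

theorem lyndon_factorization_pow_mul_general {A : Type*} [LinearOrder A]
    (u x : List A) (hu : IsLyndon u) (hxu : LtStr x u)
    (L : List (List A))
    (hLjoin : L.flatten = x) (hLly : ∀ w ∈ L, IsLyndon w)
    (hLmono : L.Chain' (fun a b => b ≤ a)) (n : ℕ) :
    ((List.replicate n u ++ L).flatten = (List.replicate n u).flatten ++ x ∧
      (∀ w ∈ List.replicate n u ++ L, IsLyndon w) ∧
      (List.replicate n u ++ L).Chain' (fun a b => b ≤ a)) ∧
    ∀ M : List (List A),
      M.flatten = (List.replicate n u).flatten ++ x →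
      (∀ w ∈ M, IsLyndon w) → M.Chain' (fun a b => b ≤ a) →
      M = List.replicate n u ++ L := by
  have hhead : ∀ v ∈ L.head?, v ≤ u := by
    intro v hv
    obtain ⟨L', rfl⟩ := List.head?_eq_some_iff.mp hv
    have hvx : v <+: x := hLjoin ▸ List.prefix_append v L'.flatten
    exact (hvx.le'.trans_lt hxu.lt).le
  have hflatten : (List.replicate n u ++ L).flatten = (List.replicate n u).flatten ++ x := by
    rw [List.flatten_append, hLjoin]
  have hfact := IsLyndonFactorization.replicate_append hu ⟨hLly, hLmono⟩ hhead n
  exact ⟨⟨hflatten, hfact⟩, fun M hM hMly hMmono =>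
    IsLyndonFactorization.eq_of_flatten_eq ⟨hMly, hMmono⟩ hfact (hM.trans hflatten.symm)⟩

theorem lyndon_factorization_pow_mul {A : Type*} [LinearOrder A]
    (u x : List A) (hu : IsLyndon u) (hxu : LtStr x u) (hx : x ≠ [])
    (L : List (List A))
    (hLjoin : L.flatten = x) (hLly : ∀ w ∈ L, IsLyndon w)
    (hLmono : L.Chain' (fun a b => b ≤ a)) (n : ℕ) :
    ((List.replicate n u ++ L).flatten = (List.replicate n u).flatten ++ x ∧
      (∀ w ∈ List.replicate n u ++ L, IsLyndon w) ∧
      (List.replicate n u ++ L).Chain' (fun a b => b ≤ a)) ∧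
    ∀ M : List (List A),
      M.flatten = (List.replicate n u).flatten ++ x →
      (∀ w ∈ M, IsLyndon w) → M.Chain' (fun a b => b ≤ a) →
      M = List.replicate n u ++ L :=
  lyndon_factorization_pow_mul_general u x hu hxu L hLjoin hLly hLmono n
end
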